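/- Assume q is odd and let R(y) be the 9×9 commutator matrix defined in the context, for y = (y_0, ..., y_8) ∈ F^9. Then R(y) has rank ≤ 4 if and only if the following seven polynomial expressions all vanish at y: y_0·y_3 − y_4·y_5; y_1·y_2 − y_4·y_6; y_0·y_2 − y_1·y_3 − y_4·y_7; y_2^2·y_5 − y_3^2·y_6 − y_2·y_3·y_7; y_1^2·y_5 − y_0^2·y_6 + y_0·y_1·y_7; y_1·y_3^2 − y_2·y_4·y_5 + y_3·y_4·y_7; y_1^2·y_3 − y_0·y_4·y_6 + y_1·y_4·y_7. -/

import Mathlib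

/-!
Rank at most `4` means that every `5 × 5` minor of `R(y)` vanishes. Eleven well-chosen minors
factor as a power of `2` times a monomial times one of the first five relations, so, `2` being a
unit when `q` is odd, a case split on which monomial is nonzero yields those relations; the last
two relations are combinations of the first three. Conversely, according to which of `y₄`, `y₂`,
`y₃`, `y₀`, `y₁` is nonzero, the relations make a nonzero multiple of every row of `R(y)` a
combination of four fixed rows, i.e. `c • R(y) = B * C` with `C` those four rows.
-/

/-- The `9×9` commutator matrix `R(y)` of the Lie centralizer of the nilpotent element
`C_{[2,1,1]}(0)`. -/
def R211 (F : Type*) [Field F] (y : Fin 9 → F) : Matrix (Fin 9) (Fin 9) F :=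
  !![0, 0, y 4, 0, 0, 0, y 1, y 0, -2 * y 0;
     0, 0, 0, y 4, 0, y 0, 0, -y 1, -2 * y 1;
     -y 4, 0, 0, 0, 0, -y 3, 0, -y 2, 2 * y 2;
     0, -y 4, 0, 0, 0, 0, -y 2, y 3, 2 * y 3;
     0, 0, 0, 0, 0, 0, 0, 0, 0;
     0, -y 0, y 3, 0, 0, 0, -y 7, 2 * y 5, 0;
     -y 1, 0, 0, y 2, 0, y 7, 0, -2 * y 6, 0;
     -y 0, y 1, y 2, -y 3, 0, -2 * y 5, 2 * y 6, 0, 0;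
     2 * y 0, 2 * y 1, -2 * y 2, -2 * y 3, 0, 0, 0, 0, 0]

namespace Matrix

variable {m n ι R : Type*} [Fintype n] [Fintype ι] [CommRing R]

theorem det_submatrix_eq_zero_of_rank_lt [IsDomain R] [DecidableEq ι] {A : Matrix m n R}
    (h : A.rank < Fintype.card ι) (f : ι → m) (g : ι → n) : (A.submatrix f g).det = 0 := by
  by_contra hdet
  have := rank_of_det_ne_zero hdet ▸ A.rank_submatrix_le f g
  omega

theorem rank_le_card_of_smul_eq_mul [StrongRankCondition R] {c : R} (hc : c ∈ nonZeroDivisors R)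
    {A : Matrix m n R} (B : Matrix m ι R) (C : Matrix ι n R) (h : c • A = B * C) :
    A.rank ≤ Fintype.card ι :=
  calc A.rank = (c • A).rank := (rank_smul_of_mem_nonZeroDivisors A hc).symm
    _ ≤ B.rank := h ▸ rank_mul_le_left B C
    _ ≤ Fintype.card ι := rank_le_card_width B

end Matrix

theorem FiniteField.two_ne_zero_of_odd_card {F : Type*} [Field F] [Fintype F]
    (h : Odd (Fintype.card F)) : (2 : F) ≠ 0 :=
  Ring.two_ne_zero fun hF => Nat.not_even_iff_odd.2 h <|
    Nat.even_iff.2 (FiniteField.even_card_of_char_two hF)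

section Minors

variable {F : Type*} [Field F] (y : Fin 9 → F)

theorem det_R211_submatrix_01235_01237 :
    ((R211 F y).submatrix ![0, 1, 2, 3, 5] ![0, 1, 2, 3, 7]).det =
      -2 * y 4 ^ 3 * (y 0 * y 3 - y 4 * y 5) := by
  rw [← Matrix.etaExpand_eq (Matrix.submatrix _ _ _)]
  simp [Matrix.etaExpand, FinVec.etaExpand, FinVec.seq, FinVec.map, Matrix.vecTail, R211,
    Matrix.det_succ_row_zero, Fin.sum_univ_succ, Fin.succAbove]
  ring

theorem det_R211_submatrix_01357_02578 :
    ((R211 F y).submatrix ![0, 1, 3, 5, 7] ![0, 2, 5, 7, 8]).det =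
      -(2 * y 0) ^ 2 * y 3 * (y 0 * y 3 - y 4 * y 5) := by
  rw [← Matrix.etaExpand_eq (Matrix.submatrix _ _ _)]
  simp [Matrix.etaExpand, FinVec.etaExpand, FinVec.seq, FinVec.map, Matrix.vecTail, R211,
    Matrix.det_succ_row_zero, Fin.sum_univ_succ, Fin.succAbove]
  ring

theorem det_R211_submatrix_01236_01237 :
    ((R211 F y).submatrix ![0, 1, 2, 3, 6] ![0, 1, 2, 3, 7]).det =
      2 * y 4 ^ 3 * (y 1 * y 2 - y 4 * y 6) := by
  rw [← Matrix.etaExpand_eq (Matrix.submatrix _ _ _)]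
  simp [Matrix.etaExpand, FinVec.etaExpand, FinVec.seq, FinVec.map, Matrix.vecTail, R211,
    Matrix.det_succ_row_zero, Fin.sum_univ_succ, Fin.succAbove]
  ring

theorem det_R211_submatrix_01267_13678 :
    ((R211 F y).submatrix ![0, 1, 2, 6, 7] ![1, 3, 6, 7, 8]).det =
      (2 * y 1) ^ 2 * y 2 * (y 1 * y 2 - y 4 * y 6) := by
  rw [← Matrix.etaExpand_eq (Matrix.submatrix _ _ _)]
  simp [Matrix.etaExpand, FinVec.etaExpand, FinVec.seq, FinVec.map, Matrix.vecTail, R211,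
    Matrix.det_succ_row_zero, Fin.sum_univ_succ, Fin.succAbove]
  ring

theorem det_R211_submatrix_01235_01236 :
    ((R211 F y).submatrix ![0, 1, 2, 3, 5] ![0, 1, 2, 3, 6]).det =
      y 4 ^ 3 * (y 0 * y 2 - y 1 * y 3 - y 4 * y 7) := by
  rw [← Matrix.etaExpand_eq (Matrix.submatrix _ _ _)]
  simp [Matrix.etaExpand, FinVec.etaExpand, FinVec.seq, FinVec.map, Matrix.vecTail, R211,
    Matrix.det_succ_row_zero, Fin.sum_univ_succ, Fin.succAbove]
  ring

theorem det_R211_submatrix_01368_23568 :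
    ((R211 F y).submatrix ![0, 1, 3, 6, 8] ![2, 3, 5, 6, 8]).det =
      y 0 * (2 * y 2) ^ 2 * (y 0 * y 2 - y 1 * y 3 - y 4 * y 7) := by
  rw [← Matrix.etaExpand_eq (Matrix.submatrix _ _ _)]
  simp [Matrix.etaExpand, FinVec.etaExpand, FinVec.seq, FinVec.map, Matrix.vecTail, R211,
    Matrix.det_succ_row_zero, Fin.sum_univ_succ, Fin.succAbove]
  ring

theorem det_R211_submatrix_01568_02368 :
    ((R211 F y).submatrix ![0, 1, 5, 6, 8] ![0, 2, 3, 6, 8]).det =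
      -(2 * y 1) ^ 2 * y 3 * (y 0 * y 2 - y 1 * y 3 - y 4 * y 7) := by
  rw [← Matrix.etaExpand_eq (Matrix.submatrix _ _ _)]
  simp [Matrix.etaExpand, FinVec.etaExpand, FinVec.seq, FinVec.map, Matrix.vecTail, R211,
    Matrix.det_succ_row_zero, Fin.sum_univ_succ, Fin.succAbove]
  ring

theorem det_R211_submatrix_23567_23678 :
    ((R211 F y).submatrix ![2, 3, 5, 6, 7] ![2, 3, 6, 7, 8]).det =
      (2 * y 2) ^ 2 * (y 2 ^ 2 * y 5 - y 3 ^ 2 * y 6 - y 2 * y 3 * y 7) := by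
  rw [← Matrix.etaExpand_eq (Matrix.submatrix _ _ _)]
  simp [Matrix.etaExpand, FinVec.etaExpand, FinVec.seq, FinVec.map, Matrix.vecTail, R211,
    Matrix.det_succ_row_zero, Fin.sum_univ_succ, Fin.succAbove]
  ring

theorem det_R211_submatrix_23567_23578 :
    ((R211 F y).submatrix ![2, 3, 5, 6, 7] ![2, 3, 5, 7, 8]).det =
      (2 * y 3) ^ 2 * (y 2 ^ 2 * y 5 - y 3 ^ 2 * y 6 - y 2 * y 3 * y 7) := by
  rw [← Matrix.etaExpand_eq (Matrix.submatrix _ _ _)]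
  simp [Matrix.etaExpand, FinVec.etaExpand, FinVec.seq, FinVec.map, Matrix.vecTail, R211,
    Matrix.det_succ_row_zero, Fin.sum_univ_succ, Fin.succAbove]
  ring

theorem det_R211_submatrix_01567_01578 :
    ((R211 F y).submatrix ![0, 1, 5, 6, 7] ![0, 1, 5, 7, 8]).det =
      -(2 * y 0) ^ 2 * (y 1 ^ 2 * y 5 - y 0 ^ 2 * y 6 + y 0 * y 1 * y 7) := by
  rw [← Matrix.etaExpand_eq (Matrix.submatrix _ _ _)]
  simp [Matrix.etaExpand, FinVec.etaExpand, FinVec.seq, FinVec.map, Matrix.vecTail, R211,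
    Matrix.det_succ_row_zero, Fin.sum_univ_succ, Fin.succAbove]
  ring

theorem det_R211_submatrix_01567_01678 :
    ((R211 F y).submatrix ![0, 1, 5, 6, 7] ![0, 1, 6, 7, 8]).det =
      -(2 * y 1) ^ 2 * (y 1 ^ 2 * y 5 - y 0 ^ 2 * y 6 + y 0 * y 1 * y 7) := by
  rw [← Matrix.etaExpand_eq (Matrix.submatrix _ _ _)]
  simp [Matrix.etaExpand, FinVec.etaExpand, FinVec.seq, FinVec.map, Matrix.vecTail, R211,
    Matrix.det_succ_row_zero, Fin.sum_univ_succ, Fin.succAbove]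
  ring

end Minors

section Necessity

variable {F : Type*} [Field F] {y : Fin 9 → F}

theorem det_R211_submatrix_eq_zero (h : (R211 F y).rank ≤ 4) (f g : Fin 5 → Fin 9) :
    ((R211 F y).submatrix f g).det = 0 :=
  Matrix.det_submatrix_eq_zero_of_rank_lt (by simpa [Nat.lt_succ_iff] using h) f g

theorem R211_relation₁_of_rank_le_four (h2 : (2 : F) ≠ 0) (h : (R211 F y).rank ≤ 4) :
    y 0 * y 3 - y 4 * y 5 = 0 := by
  have m₁ := det_R211_submatrix_eq_zero h ![0, 1, 2, 3, 5] ![0, 1, 2, 3, 7]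
  have m₂ := det_R211_submatrix_eq_zero h ![0, 1, 3, 5, 7] ![0, 2, 5, 7, 8]
  rw [det_R211_submatrix_01235_01237] at m₁
  rw [det_R211_submatrix_01357_02578] at m₂
  simp only [neg_mul, neg_eq_zero, mul_eq_zero, h2, ne_eq, OfNat.ofNat_ne_zero, not_false_eq_true,
    pow_eq_zero_iff, false_or] at m₁ m₂
  grind

theorem R211_relation₂_of_rank_le_four (h2 : (2 : F) ≠ 0) (h : (R211 F y).rank ≤ 4) :
    y 1 * y 2 - y 4 * y 6 = 0 := by
  have m₁ := det_R211_submatrix_eq_zero h ![0, 1, 2, 3, 6] ![0, 1, 2, 3, 7]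
  have m₂ := det_R211_submatrix_eq_zero h ![0, 1, 2, 6, 7] ![1, 3, 6, 7, 8]
  rw [det_R211_submatrix_01236_01237] at m₁
  rw [det_R211_submatrix_01267_13678] at m₂
  simp only [mul_eq_zero, h2, ne_eq, OfNat.ofNat_ne_zero, not_false_eq_true, pow_eq_zero_iff, false_or] at m₁ m₂
  grind

theorem R211_relation₃_of_rank_le_four (h2 : (2 : F) ≠ 0) (h : (R211 F y).rank ≤ 4) :
    y 0 * y 2 - y 1 * y 3 - y 4 * y 7 = 0 := by
  have m₁ := det_R211_submatrix_eq_zero h ![0, 1, 2, 3, 5] ![0, 1, 2, 3, 6]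
  have m₂ := det_R211_submatrix_eq_zero h ![0, 1, 3, 6, 8] ![2, 3, 5, 6, 8]
  have m₃ := det_R211_submatrix_eq_zero h ![0, 1, 5, 6, 8] ![0, 2, 3, 6, 8]
  rw [det_R211_submatrix_01235_01236] at m₁
  rw [det_R211_submatrix_01368_23568] at m₂
  rw [det_R211_submatrix_01568_02368] at m₃
  simp only [neg_mul, neg_eq_zero, mul_eq_zero, h2, ne_eq, OfNat.ofNat_ne_zero, not_false_eq_true,
    pow_eq_zero_iff, false_or] at m₁ m₂ m₃
  grind

theorem R211_relation₄_of_rank_le_four (h2 : (2 : F) ≠ 0) (h : (R211 F y).rank ≤ 4) :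
    y 2 ^ 2 * y 5 - y 3 ^ 2 * y 6 - y 2 * y 3 * y 7 = 0 := by
  have m₁ := det_R211_submatrix_eq_zero h ![2, 3, 5, 6, 7] ![2, 3, 6, 7, 8]
  have m₂ := det_R211_submatrix_eq_zero h ![2, 3, 5, 6, 7] ![2, 3, 5, 7, 8]
  rw [det_R211_submatrix_23567_23678] at m₁
  rw [det_R211_submatrix_23567_23578] at m₂
  simp only [mul_eq_zero, h2, ne_eq, OfNat.ofNat_ne_zero, not_false_eq_true, pow_eq_zero_iff, false_or] at m₁ m₂
  grind

theorem R211_relation₅_of_rank_le_four (h2 : (2 : F) ≠ 0) (h : (R211 F y).rank ≤ 4) :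
    y 1 ^ 2 * y 5 - y 0 ^ 2 * y 6 + y 0 * y 1 * y 7 = 0 := by
  have m₁ := det_R211_submatrix_eq_zero h ![0, 1, 5, 6, 7] ![0, 1, 5, 7, 8]
  have m₂ := det_R211_submatrix_eq_zero h ![0, 1, 5, 6, 7] ![0, 1, 6, 7, 8]
  rw [det_R211_submatrix_01567_01578] at m₁
  rw [det_R211_submatrix_01567_01678] at m₂
  simp only [neg_mul, neg_eq_zero, mul_eq_zero, h2, ne_eq, OfNat.ofNat_ne_zero, not_false_eq_true,
    pow_eq_zero_iff, false_or] at m₁ m₂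
  grind

end Necessity

section Sufficiency

variable {F : Type*} [Field F] {y : Fin 9 → F}

theorem rank_R211_le_four_of_y4_ne_zero (h4 : y 4 ≠ 0) (hP1 : y 0 * y 3 - y 4 * y 5 = 0)
    (hP2 : y 1 * y 2 - y 4 * y 6 = 0) (hP3 : y 0 * y 2 - y 1 * y 3 - y 4 * y 7 = 0) :
    (R211 F y).rank ≤ 4 := by
  refine Matrix.rank_le_card_of_smul_eq_mul (mem_nonZeroDivisors_of_ne_zero h4)
    !![y 4, 0, 0, 0;
       0, y 4, 0, 0;
       0, 0, y 4, 0;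
       0, 0, 0, y 4;
       0, 0, 0, 0;
       y 3, 0, 0, y 0;
       0, y 2, y 1, 0;
       y 2, -y 3, y 0, -y 1;
       -2 * y 2, -2 * y 3, -2 * y 0, -2 * y 1]
    ((R211 F y).submatrix ![0, 1, 2, 3] id) ?_
  rw [← Matrix.ext_iff]
  simp only [Fin.forall_fin_succ, IsEmpty.forall_iff, and_true, Matrix.smul_apply, smul_eq_mul,
    Matrix.mul_apply, Fin.sum_univ_succ, Fin.sum_univ_zero, R211, Matrix.of_apply,
    Matrix.cons_val, Matrix.cons_val_zero, Matrix.cons_val_succ, Matrix.submatrix_apply, id,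
    mul_zero, zero_mul, add_zero, zero_add, true_and]
  repeat' apply And.intro
  all_goals grind

theorem rank_R211_le_four_of_y2_ne_zero (h4 : y 4 = 0) (h0 : y 0 = 0) (h1 : y 1 = 0)
    (h2 : y 2 ≠ 0) (hP4 : y 2 ^ 2 * y 5 - y 3 ^ 2 * y 6 - y 2 * y 3 * y 7 = 0) :
    (R211 F y).rank ≤ 4 := by
  refine Matrix.rank_le_card_of_smul_eq_mul (mem_nonZeroDivisors_of_ne_zero (pow_ne_zero 2 h2))
    !![0, 0, 0, 0;
       0, 0, 0, 0;
       y 2 ^ 2, 0, 0, 0;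
       0, y 2 ^ 2, 0, 0;
       0, 0, 0, 0;
       y 3 * y 7 - 2 * y 2 * y 5, y 2 * y 7 + 2 * y 3 * y 6, y 3 ^ 2, y 2 * y 3;
       0, 0, y 2 ^ 2, 0;
       0, 0, 0, y 2 ^ 2;
       4 * y 3 * y 6, -4 * y 2 * y 6, -4 * y 2 * y 3, -2 * y 2 ^ 2]
    ((R211 F y).submatrix ![2, 3, 6, 7] id) ?_
  rw [← Matrix.ext_iff]
  simp only [Fin.forall_fin_succ, IsEmpty.forall_iff, and_true, Matrix.smul_apply, smul_eq_mul,
    Matrix.mul_apply, Fin.sum_univ_succ, Fin.sum_univ_zero, R211, Matrix.of_apply,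
    Matrix.cons_val, Matrix.cons_val_zero, Matrix.cons_val_succ, Matrix.submatrix_apply, id,
    h0, h1, h4, neg_zero, mul_zero, zero_mul, add_zero, zero_add, true_and]
  repeat' apply And.intro
  all_goals grind

theorem rank_R211_le_four_of_y3_ne_zero (h4 : y 4 = 0) (h0 : y 0 = 0) (h1 : y 1 = 0)
    (h2 : y 2 = 0) (h3 : y 3 ≠ 0) (h6 : y 6 = 0) :
    (R211 F y).rank ≤ 4 := by
  refine Matrix.rank_le_card_of_smul_eq_mul (mem_nonZeroDivisors_of_ne_zero h3)
    !![0, 0, 0, 0;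
       0, 0, 0, 0;
       y 3, 0, 0, 0;
       0, y 3, 0, 0;
       0, 0, 0, 0;
       0, 0, y 3, 0;
       -y 7, 0, 0, 0;
       0, 0, 0, y 3;
       -4 * y 5, 0, 0, 2 * y 3]
    ((R211 F y).submatrix ![2, 3, 5, 7] id) ?_
  rw [← Matrix.ext_iff]
  simp only [Fin.forall_fin_succ, IsEmpty.forall_iff, and_true, Matrix.smul_apply, smul_eq_mul,
    Matrix.mul_apply, Fin.sum_univ_succ, Fin.sum_univ_zero, R211, Matrix.of_apply,
    Matrix.cons_val, Matrix.cons_val_zero, Matrix.cons_val_succ, Matrix.submatrix_apply, id,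
    h0, h1, h2, h4, h6, neg_zero, mul_zero, zero_mul, add_zero, zero_add, true_and]
  repeat' apply And.intro
  all_goals grind

theorem rank_R211_le_four_of_y0_ne_zero (h4 : y 4 = 0) (h2 : y 2 = 0) (h3 : y 3 = 0)
    (h0 : y 0 ≠ 0) (hP5 : y 1 ^ 2 * y 5 - y 0 ^ 2 * y 6 + y 0 * y 1 * y 7 = 0) :
    (R211 F y).rank ≤ 4 := by
  refine Matrix.rank_le_card_of_smul_eq_mul (mem_nonZeroDivisors_of_ne_zero (pow_ne_zero 2 h0))
    !![y 0 ^ 2, 0, 0, 0;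
       0, y 0 ^ 2, 0, 0;
       0, 0, 0, 0;
       0, 0, 0, 0;
       0, 0, 0, 0;
       0, 0, y 0 ^ 2, 0;
       y 1 * y 7 - 2 * y 0 * y 6, y 0 * y 7 + 2 * y 1 * y 5, y 1 ^ 2, y 0 * y 1;
       0, 0, 0, y 0 ^ 2;
       4 * y 1 * y 5, -4 * y 0 * y 5, -4 * y 0 * y 1, -2 * y 0 ^ 2]
    ((R211 F y).submatrix ![0, 1, 5, 7] id) ?_
  rw [← Matrix.ext_iff]
  simp only [Fin.forall_fin_succ, IsEmpty.forall_iff, and_true, Matrix.smul_apply, smul_eq_mul,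
    Matrix.mul_apply, Fin.sum_univ_succ, Fin.sum_univ_zero, R211, Matrix.of_apply,
    Matrix.cons_val, Matrix.cons_val_zero, Matrix.cons_val_succ, Matrix.submatrix_apply, id,
    h2, h3, h4, neg_zero, mul_zero, zero_mul, add_zero, zero_add, true_and]
  repeat' apply And.intro
  all_goals grind

theorem rank_R211_le_four_of_y1_ne_zero (h4 : y 4 = 0) (h2 : y 2 = 0) (h3 : y 3 = 0)
    (h0 : y 0 = 0) (h1 : y 1 ≠ 0) (h5 : y 5 = 0) :
    (R211 F y).rank ≤ 4 := by
  refine Matrix.rank_le_card_of_smul_eq_mul (mem_nonZeroDivisors_of_ne_zero h1)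
    !![y 1, 0, 0, 0;
       0, y 1, 0, 0;
       0, 0, 0, 0;
       0, 0, 0, 0;
       0, 0, 0, 0;
       -y 7, 0, 0, 0;
       0, 0, y 1, 0;
       0, 0, 0, y 1;
       -4 * y 6, 0, 0, 2 * y 1]
    ((R211 F y).submatrix ![0, 1, 6, 7] id) ?_
  rw [← Matrix.ext_iff]
  simp only [Fin.forall_fin_succ, IsEmpty.forall_iff, and_true, Matrix.smul_apply, smul_eq_mul,
    Matrix.mul_apply, Fin.sum_univ_succ, Fin.sum_univ_zero, R211, Matrix.of_apply,
    Matrix.cons_val, Matrix.cons_val_zero, Matrix.cons_val_succ, Matrix.submatrix_apply, id,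
    h0, h2, h3, h4, h5, neg_zero, mul_zero, zero_mul, add_zero, zero_add, true_and]
  repeat' apply And.intro
  all_goals grind

theorem rank_R211_le_three_of_eq_zero (h0 : y 0 = 0) (h1 : y 1 = 0) (h2 : y 2 = 0)
    (h3 : y 3 = 0) (h4 : y 4 = 0) :
    (R211 F y).rank ≤ 3 := by
  refine Matrix.rank_le_card_of_smul_eq_mul (one_mem _)
    !![0, 0, 0;
       0, 0, 0;
       0, 0, 0;
       0, 0, 0;
       0, 0, 0;
       1, 0, 0;
       0, 1, 0;
       0, 0, 1;
       0, 0, 0]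
    ((R211 F y).submatrix ![5, 6, 7] id) ?_
  rw [← Matrix.ext_iff]
  simp only [Fin.forall_fin_succ, IsEmpty.forall_iff, and_true, Matrix.smul_apply, smul_eq_mul,
    Matrix.mul_apply, Fin.sum_univ_succ, Fin.sum_univ_zero, R211, Matrix.of_apply,
    Matrix.cons_val, Matrix.cons_val_zero, Matrix.cons_val_succ, Matrix.submatrix_apply, id,
    h0, h1, h2, h3, h4, neg_zero, mul_zero, zero_mul, add_zero, zero_add]

theorem rank_R211_le_four_of_relations (hP1 : y 0 * y 3 - y 4 * y 5 = 0)
    (hP2 : y 1 * y 2 - y 4 * y 6 = 0) (hP3 : y 0 * y 2 - y 1 * y 3 - y 4 * y 7 = 0)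
    (hP4 : y 2 ^ 2 * y 5 - y 3 ^ 2 * y 6 - y 2 * y 3 * y 7 = 0)
    (hP5 : y 1 ^ 2 * y 5 - y 0 ^ 2 * y 6 + y 0 * y 1 * y 7 = 0) :
    (R211 F y).rank ≤ 4 := by
  rcases ne_or_eq (y 4) 0 with h4 | h4
  · exact rank_R211_le_four_of_y4_ne_zero h4 hP1 hP2 hP3
  have h01_or_h23 : (y 0 = 0 ∧ y 1 = 0) ∨ (y 2 = 0 ∧ y 3 = 0) := by
    simp only [h4, zero_mul, sub_zero] at hP1 hP2 hP3
    grind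
  rcases h01_or_h23 with ⟨h0, h1⟩ | ⟨h2, h3⟩
  · rcases ne_or_eq (y 2) 0 with h2 | h2
    · exact rank_R211_le_four_of_y2_ne_zero h4 h0 h1 h2 hP4
    rcases ne_or_eq (y 3) 0 with h3 | h3
    · refine rank_R211_le_four_of_y3_ne_zero h4 h0 h1 h2 h3 ?_
      simpa [h2, h3] using hP4
    exact (rank_R211_le_three_of_eq_zero h0 h1 h2 h3 h4).trans (by norm_num)
  · rcases ne_or_eq (y 0) 0 with h0 | h0
    · exact rank_R211_le_four_of_y0_ne_zero h4 h2 h3 h0 hP5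
    rcases ne_or_eq (y 1) 0 with h1 | h1
    · refine rank_R211_le_four_of_y1_ne_zero h4 h2 h3 h0 h1 ?_
      simpa [h0, h1] using hP5
    exact (rank_R211_le_three_of_eq_zero h0 h1 h2 h3 h4).trans (by norm_num)

end Sufficiency

/-- Assume `q` is odd.  Then `R(y)` has rank `≤ 4` iff the seven listed
polynomial expressions all vanish at `y`. -/
theorem stmt_16 (F : Type*) [Field F] [Fintype F] (q : ℕ) (hq : Fintype.card F = q)
    (hodd : Odd q) (y : Fin 9 → F) :
    (R211 F y).rank ≤ 4 ↔
      (y 0 * y 3 - y 4 * y 5 = 0 ∧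
       y 1 * y 2 - y 4 * y 6 = 0 ∧
       y 0 * y 2 - y 1 * y 3 - y 4 * y 7 = 0 ∧
       y 2 ^ 2 * y 5 - y 3 ^ 2 * y 6 - y 2 * y 3 * y 7 = 0 ∧
       y 1 ^ 2 * y 5 - y 0 ^ 2 * y 6 + y 0 * y 1 * y 7 = 0 ∧
       y 1 * y 3 ^ 2 - y 2 * y 4 * y 5 + y 3 * y 4 * y 7 = 0 ∧
       y 1 ^ 2 * y 3 - y 0 * y 4 * y 6 + y 1 * y 4 * y 7 = 0) := by
  have h2 : (2 : F) ≠ 0 := FiniteField.two_ne_zero_of_odd_card (hq ▸ hodd)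
  constructor
  · intro h
    have hP1 := R211_relation₁_of_rank_le_four h2 h
    have hP2 := R211_relation₂_of_rank_le_four h2 h
    have hP3 := R211_relation₃_of_rank_le_four h2 h
    exact ⟨hP1, hP2, hP3, R211_relation₄_of_rank_le_four h2 h,
      R211_relation₅_of_rank_le_four h2 h,
      by linear_combination y 2 * hP1 - y 3 * hP3, by linear_combination y 0 * hP2 - y 1 * hP3⟩
  · rintro ⟨hP1, hP2, hP3, hP4, hP5, -, -⟩
    exact rank_R211_le_four_of_relations hP1 hP2 hP3 hP4 hP5
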